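/- Let f, g be meromorphic on a punctured open disc D ∖ {0} around 0 in ℂ satisfying the B₂ functional equation, with neither f nor g identically zero. Then f and g are odd functions: f(−z) = −f(z) and g(−z) = −g(z) for all z ∈ D ∖ {0} at which the respective function is analytic. -/
import Mathlib

open Filter Metric Set Topology Complex


/-!
STATEMENT 8: Non-trivial solutions of the `B₂` functional equation are odd
functions.
-/

/-- The punctured open disc of radius `r` around `0` in `ℂ`. -/
def PDisc (r : ℝ) : Set ℂ := Metric.ball (0 : ℂ) r \ {0}

/-- The pair `(f, g)` satisfies the `B₂` functional equation on the punctured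
disc of radius `r`:
`f(x)(g(x+y) + g(x−y)) + f(y)(g(x+y) − g(x−y)) = 0`
whenever `x, y, x+y, x−y` lie in the punctured disc, `f` is analytic at `x`
and `y`, and `g` is analytic at `x+y` and `x−y`. -/
def B2FE (r : ℝ) (f g : ℂ → ℂ) : Prop :=
  ∀ x y : ℂ, x ∈ PDisc r → y ∈ PDisc r → x + y ∈ PDisc r → x - y ∈ PDisc r →
    AnalyticAt ℂ f x → AnalyticAt ℂ f y →
    AnalyticAt ℂ g (x + y) → AnalyticAt ℂ g (x - y) →
    f x * (g (x + y) + g (x - y)) + f y * (g (x + y) - g (x - y)) = 0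



lemma mem_pdisc {r : ℝ} {z : ℂ} : z ∈ PDisc r ↔ ‖z‖ < r ∧ z ≠ 0 := by
  simp [PDisc, Metric.mem_ball, dist_zero_right]

lemma isOpen_pdisc {r : ℝ} : IsOpen (PDisc r) :=
  Metric.isOpen_ball.sdiff isClosed_singleton

lemma neg_mem_pdisc {r : ℝ} {z : ℂ} (hz : z ∈ PDisc r) : -z ∈ PDisc r := by
  rw [mem_pdisc] at hz ⊢
  simpa using hz

lemma isPreconnected_pdisc {r : ℝ} (hr : 0 < r) : IsPreconnected (PDisc r) := by
  set L : Set ℂ := (fun t : ℝ => (t : ℂ)) '' Ioo 0 r with hL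
  have hLsub : L ⊆ PDisc r := by
    rintro _ ⟨t, ⟨ht0, htr⟩, rfl⟩
    rw [mem_pdisc]
    constructor
    · simpa [abs_of_pos ht0] using htr
    · simpa using ht0.ne'
  have hLconn : IsPreconnected L :=
    isPreconnected_Ioo.image _ Complex.continuous_ofReal.continuousOn
  have hrank : (1 : Cardinal) < Module.rank ℝ ℂ := by
    rw [Complex.rank_real_complex]
    exact_mod_cast one_lt_two
  have key : PDisc r = ⋃₀ ((fun z => Metric.sphere (0:ℂ) ‖z‖ ∪ L) '' PDisc r) := by
    apply Subset.antisymm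
    · intro z hz
      exact ⟨_, ⟨z, hz, rfl⟩, Or.inl (by simp)⟩
    · rintro z ⟨_, ⟨w, hw, rfl⟩, hz⟩
      rcases hz with hz | hz
      · rw [mem_sphere_zero_iff_norm] at hz
        rw [mem_pdisc] at hw ⊢
        constructor
        · rw [hz]; exact hw.1
        · intro h
          rw [h] at hz
          exact hw.2 (by simpa [norm_eq_zero] using hz.symm)
      · exact hLsub hz
  rw [key]
  apply isPreconnected_sUnion ((r/2 : ℝ) : ℂ)
  · rintro _ ⟨z, hz, rfl⟩
    exact Or.inr ⟨r/2, ⟨by linarith, by linarith⟩, rfl⟩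
  · rintro _ ⟨z, hz, rfl⟩
    have hz' := (mem_pdisc.mp hz)
    have hnz : 0 < ‖z‖ := norm_pos_iff.mpr hz'.2
    apply IsPreconnected.union ((‖z‖ : ℝ) : ℂ)
    · simp [abs_of_pos hnz]
    · exact ⟨‖z‖, ⟨hnz, hz'.1⟩, rfl⟩
    · exact isPreconnected_sphere hrank _ _
    · exact hLconn

lemma merom_dichotomy {f : ℂ → ℂ} {x : ℂ} (hf : MeromorphicAt f x) :
    (∀ᶠ z in 𝓝[≠] x, f z = 0) ∨ (∀ᶠ z in 𝓝[≠] x, f z ≠ 0) := by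
  obtain ⟨n, h⟩ := hf
  rcases h.eventually_eq_zero_or_eventually_ne_zero with h0 | h0
  · left
    have h1 : ∀ᶠ z in 𝓝[≠] x, (z - x) ^ n • f z = 0 := h0.filter_mono nhdsWithin_le_nhds
    filter_upwards [h1, self_mem_nhdsWithin] with z hz hz'
    have : (z - x) ^ n ≠ 0 := pow_ne_zero _ (sub_ne_zero.mpr hz')
    exact (smul_eq_zero_iff_right this).mp hz
  · right
    filter_upwards [h0] with z hz
    intro h'
    exact hz (by simp [h'])

lemma global_nonvanishing {r : ℝ} (hr : 0 < r) {f : ℂ → ℂ}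
    (hf : MeromorphicOn f (PDisc r))
    (hne : ∃ z ∈ PDisc r, AnalyticAt ℂ f z ∧ f z ≠ 0) :
    ∀ x ∈ PDisc r, ∀ᶠ z in 𝓝[≠] x, f z ≠ 0 := by
  set U := PDisc r with hU
  set S := {x | x ∈ U ∧ ∀ᶠ z in 𝓝[≠] x, f z = 0} with hSdef
  -- S is open
  have hSopen : IsOpen S := by
    rw [isOpen_iff_mem_nhds]
    rintro x ⟨hxU, hx⟩
    rw [eventually_nhdsWithin_iff] at hx
    obtain ⟨V, hV, hVopen, hxV⟩ := _root_.eventually_nhds_iff.mp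
      (hx.and (isOpen_pdisc.eventually_mem hxU))
    have hVS : V ⊆ S := by
      intro y hyV
      refine ⟨(hV y hyV).2, ?_⟩
      by_cases hyx : y = x
      · subst hyx
        rw [eventually_nhdsWithin_iff]
        filter_upwards [hVopen.mem_nhds hyV] with z hz hz' using (hV z hz).1 hz'
      · have h1 : ∀ᶠ z in 𝓝 y, z ∈ V := hVopen.mem_nhds hyV
        have h2 : ∀ᶠ z in 𝓝 y, z ≠ x := eventually_ne_nhds hyx
        refine Filter.Eventually.filter_mono nhdsWithin_le_nhds ?_
        filter_upwards [h1, h2] with z hz hz' using (hV z hz).1 hz'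
    exact Filter.mem_of_superset (hVopen.mem_nhds hxV) hVS
  -- U \ S is open
  have hTopen : IsOpen (U \ S) := by
    rw [isOpen_iff_mem_nhds]
    rintro x ⟨hxU, hxS⟩
    have hx : ∀ᶠ z in 𝓝[≠] x, f z ≠ 0 := by
      rcases merom_dichotomy (hf x hxU) with h | h
      · exact absurd ⟨hxU, h⟩ hxS
      · exact h
    rw [eventually_nhdsWithin_iff] at hx
    obtain ⟨V, hV, hVopen, hxV⟩ := _root_.eventually_nhds_iff.mp
      (hx.and (isOpen_pdisc.eventually_mem hxU))
    have hVT : V ⊆ U \ S := by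
      intro y hyV
      refine ⟨(hV y hyV).2, ?_⟩
      rintro ⟨hyU, hy⟩
      by_cases hyx : y = x
      · subst hyx
        have h0 : ∀ᶠ z in 𝓝[≠] y, f z = 0 ∧ f z ≠ 0 := by
          refine hy.and ?_
          rw [eventually_nhdsWithin_iff]
          filter_upwards [hVopen.mem_nhds hxV] with z hz hz'
          exact (hV z hz).1 hz'
        obtain ⟨z, hz1, hz2⟩ := h0.exists
        exact hz2 hz1
      · have h0 : ∀ᶠ z in 𝓝[≠] y, f z = 0 ∧ f z ≠ 0 := by
          refine hy.and ?_
          refine Filter.Eventually.filter_mono nhdsWithin_le_nhds ?_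
          filter_upwards [hVopen.mem_nhds hyV, eventually_ne_nhds hyx] with z hz hz'
          exact (hV z hz).1 hz'
        obtain ⟨z, hz1, hz2⟩ := h0.exists
        exact hz2 hz1
    exact Filter.mem_of_superset (hVopen.mem_nhds hxV) hVT
  -- S is empty
  have hSempty : ∀ x, x ∉ S := by
    intro x hxS
    have hsub : U ⊆ S :=
      (isPreconnected_pdisc hr).subset_left_of_subset_union hSopen hTopen
        (disjoint_left.mpr fun a ha ha' => ha'.2 ha)
        (fun z hz => by
          by_cases h : z ∈ S
          · exact Or.inl h
          · exact Or.inr ⟨hz, h⟩)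
        ⟨x, hxS.1, hxS⟩
    obtain ⟨z₀, hz₀U, hz₀an, hz₀ne⟩ := hne
    have hz₀S := hsub hz₀U
    have : ∀ᶠ z in 𝓝[≠] z₀, f z ≠ 0 :=
      Filter.Eventually.filter_mono nhdsWithin_le_nhds
        (hz₀an.continuousAt.eventually_ne hz₀ne)
    obtain ⟨z, hz1, hz2⟩ := (hz₀S.2.and this).exists
    exact hz2 hz1
  intro x hxU
  rcases merom_dichotomy (hf x hxU) with h | h
  · exact absurd ⟨hxU, h⟩ (hSempty x)
  · exact h

lemma tendsto_affine_punctured (a c t₀ : ℂ) (ha : a ≠ 0) :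
    Tendsto (fun t => a * t + c) (𝓝[≠] t₀) (𝓝[≠] (a * t₀ + c)) := by
  apply tendsto_nhdsWithin_of_tendsto_nhds_of_eventually_within
  · exact (((continuous_const.mul continuous_id).add continuous_const).tendsto t₀).mono_left
      nhdsWithin_le_nhds
  · filter_upwards [self_mem_nhdsWithin] with t ht
    simp only [Set.mem_compl_iff, Set.mem_singleton_iff] at ht ⊢
    intro h
    exact ht (mul_left_cancel₀ ha (add_right_cancel h))
lemma ne_zero_of_im_ne_zero {z : ℂ} (h : z.im ≠ 0) : z ≠ 0 := by
  intro h0; rw [h0] at h; simp at h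

lemma exists_base {r : ℝ} (hr : 0 < r) (w : ℂ) (hw0 : w ≠ 0) (hwr : ‖w‖ < r) :
    ∃ t₀ : ℂ, t₀ ∈ PDisc r ∧ 2 * t₀ ∈ PDisc r ∧ t₀ + w ∈ PDisc r ∧ t₀ - w ∈ PDisc r := by
  have hw : 0 < ‖w‖ := norm_pos_iff.mpr hw0
  set ε : ℝ := (r - ‖w‖) / 2 with hεdef
  have hε0 : 0 < ε := by
    rw [hεdef]; linarith
  have hnormε : ‖((ε : ℝ) : ℂ)‖ = ε := by
    simp [abs_of_pos hε0]
  by_cases him : w.im = 0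
  · refine ⟨Complex.I * ε, ?_, ?_, ?_, ?_⟩ <;> rw [mem_pdisc]
    · constructor
      · rw [norm_mul, Complex.norm_I, one_mul, hnormε]; linarith
      · apply ne_zero_of_im_ne_zero
        simp [hε0.ne']
    · constructor
      · rw [norm_mul, norm_mul, Complex.norm_I, one_mul, hnormε]
        simp only [Complex.norm_ofNat]
        linarith
      · apply ne_zero_of_im_ne_zero
        simp [hε0.ne']
    · constructor
      · calc ‖Complex.I * ε + w‖ ≤ ‖Complex.I * (ε:ℂ)‖ + ‖w‖ := norm_add_le _ _
          _ = ε + ‖w‖ := by rw [norm_mul, Complex.norm_I, one_mul, hnormε]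
          _ < r := by linarith
      · apply ne_zero_of_im_ne_zero
        simp [him, hε0.ne']
    · constructor
      · calc ‖Complex.I * ε - w‖ ≤ ‖Complex.I * (ε:ℂ)‖ + ‖w‖ := norm_sub_le _ _
          _ = ε + ‖w‖ := by rw [norm_mul, Complex.norm_I, one_mul, hnormε]
          _ < r := by linarith
      · apply ne_zero_of_im_ne_zero
        simp [him, hε0.ne']
  · refine ⟨(ε : ℂ), ?_, ?_, ?_, ?_⟩ <;> rw [mem_pdisc]
    · exact ⟨by rw [hnormε]; linarith, by exact_mod_cast hε0.ne'⟩
    · constructor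
      · rw [norm_mul, hnormε]
        simp only [Complex.norm_ofNat]
        linarith
      · exact mul_ne_zero two_ne_zero (by exact_mod_cast hε0.ne')
    · constructor
      · calc ‖(ε:ℂ) + w‖ ≤ ‖(ε:ℂ)‖ + ‖w‖ := norm_add_le _ _
          _ < r := by rw [hnormε]; linarith
      · apply ne_zero_of_im_ne_zero
        simp [him]
    · constructor
      · calc ‖(ε:ℂ) - w‖ ≤ ‖(ε:ℂ)‖ + ‖w‖ := norm_sub_le _ _
          _ < r := by rw [hnormε]; linarith
      · apply ne_zero_of_im_ne_zero
        simp [him]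

theorem b2_nontrivial_solutions_are_odd
    (r : ℝ) (hr : 0 < r) (f g : ℂ → ℂ)
    (hfmer : MeromorphicOn f (PDisc r)) (hgmer : MeromorphicOn g (PDisc r))
    (hfe : B2FE r f g)
    (hfne : ∃ z ∈ PDisc r, AnalyticAt ℂ f z ∧ f z ≠ 0)
    (hgne : ∃ z ∈ PDisc r, AnalyticAt ℂ g z ∧ g z ≠ 0) :
    (∀ z ∈ PDisc r, AnalyticAt ℂ f z → AnalyticAt ℂ f (-z) → f (-z) = -f z) ∧
      (∀ z ∈ PDisc r, AnalyticAt ℂ g z → AnalyticAt ℂ g (-z) → g (-z) = -g z) := by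
  have hfnv := global_nonvanishing hr hfmer hfne
  have hgnv := global_nonvanishing hr hgmer hgne
  constructor
  · -- f is odd
    intro v hv hfv hfv'
    have hv' : -v ∈ PDisc r := neg_mem_pdisc hv
    obtain ⟨hvnorm, hvne⟩ := mem_pdisc.mp hv
    obtain ⟨t₀, ht₀, -, htp, htm⟩ := exists_base hr v hvne hvnorm
    have tendsp : Tendsto (fun x : ℂ => x + v) (𝓝[≠] t₀) (𝓝[≠] (t₀ + v)) := by
      simpa using tendsto_affine_punctured 1 v t₀ one_ne_zero
    have tendsm : Tendsto (fun x : ℂ => x - v) (𝓝[≠] t₀) (𝓝[≠] (t₀ - v)) := by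
      simpa [sub_eq_add_neg] using tendsto_affine_punctured 1 (-v) t₀ one_ne_zero
    have E1 : ∀ᶠ x in 𝓝[≠] t₀, (x ∈ PDisc r ∧ AnalyticAt ℂ f x) ∧ f x ≠ 0 :=
      (((isOpen_pdisc.eventually_mem ht₀).filter_mono nhdsWithin_le_nhds).and
        (hfmer t₀ ht₀).eventually_analyticAt).and (hfnv t₀ ht₀)
    have E2 : ∀ᶠ x in 𝓝[≠] t₀,
        ((x + v ∈ PDisc r ∧ AnalyticAt ℂ g (x + v)) ∧ g (x + v) ≠ 0) :=
      tendsp.eventually ((((isOpen_pdisc.eventually_mem htp).filter_mono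
        nhdsWithin_le_nhds).and (hgmer _ htp).eventually_analyticAt).and (hgnv _ htp))
    have E3 : ∀ᶠ x in 𝓝[≠] t₀, (x - v ∈ PDisc r ∧ AnalyticAt ℂ g (x - v)) :=
      tendsm.eventually (((isOpen_pdisc.eventually_mem htm).filter_mono
        nhdsWithin_le_nhds).and (hgmer _ htm).eventually_analyticAt)
    obtain ⟨x, ⟨⟨⟨hxU, hfx⟩, hfx0⟩, ⟨⟨hxpU, hgxp⟩, hgxp0⟩⟩, hxmU, hgxm⟩ :=
      ((E1.and E2).and E3).exists
    have h1 := hfe x v hxU hv hxpU hxmU hfx hfv hgxp hgxm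
    have h3 := hfe x (-v) hxU hv'
      (by rw [show x + -v = x - v from by ring]; exact hxmU)
      (by rw [show x - -v = x + v from by ring]; exact hxpU)
      hfx hfv'
      (by rw [show x + -v = x - v from by ring]; exact hgxm)
      (by rw [show x - -v = x + v from by ring]; exact hgxp)
    rw [show x + -v = x - v from by ring, show x - -v = x + v from by ring] at h3
    by_cases hc : g (x + v) = g (x - v)
    · exfalso
      rw [← hc] at h1
      have h0 : f x * (2 * g (x + v)) = 0 := by linear_combination h1
      rcases mul_eq_zero.mp h0 with h | h
      · exact hfx0 h
      · rcases mul_eq_zero.mp h with h' | h'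
        · exact two_ne_zero h'
        · exact hgxp0 h'
    · have key : (f v + f (-v)) * (g (x + v) - g (x - v)) = 0 := by
        linear_combination h1 - h3
      rcases mul_eq_zero.mp key with h | h
      · linear_combination h
      · exact (hc (sub_eq_zero.mp h)).elim
  · -- g is odd
    intro u hu hgu hgu'
    have hu' : -u ∈ PDisc r := neg_mem_pdisc hu
    obtain ⟨hunorm, hune⟩ := mem_pdisc.mp hu
    have hw0 : u / 2 ≠ 0 := div_ne_zero hune two_ne_zero
    have hwr : ‖u / 2‖ < r := by
      rw [norm_div, Complex.norm_ofNat]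
      linarith
    obtain ⟨t₀, -, ht2, htp, htm⟩ := exists_base hr (u / 2) hw0 hwr
    have tendsp : Tendsto (fun t : ℂ => t + u / 2) (𝓝[≠] t₀) (𝓝[≠] (t₀ + u / 2)) := by
      simpa using tendsto_affine_punctured 1 (u / 2) t₀ one_ne_zero
    have tendsm : Tendsto (fun t : ℂ => t - u / 2) (𝓝[≠] t₀) (𝓝[≠] (t₀ - u / 2)) := by
      simpa [sub_eq_add_neg] using tendsto_affine_punctured 1 (-(u / 2)) t₀ one_ne_zero
    have tends2 : Tendsto (fun t : ℂ => 2 * t) (𝓝[≠] t₀) (𝓝[≠] (2 * t₀)) := by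
      simpa using tendsto_affine_punctured 2 0 t₀ two_ne_zero
    have E1 : ∀ᶠ t in 𝓝[≠] t₀,
        ((t + u / 2 ∈ PDisc r ∧ AnalyticAt ℂ f (t + u / 2)) ∧ f (t + u / 2) ≠ 0) :=
      tendsp.eventually ((((isOpen_pdisc.eventually_mem htp).filter_mono
        nhdsWithin_le_nhds).and (hfmer _ htp).eventually_analyticAt).and (hfnv _ htp))
    have E2 : ∀ᶠ t in 𝓝[≠] t₀,
        (t - u / 2 ∈ PDisc r ∧ AnalyticAt ℂ f (t - u / 2)) :=
      tendsm.eventually (((isOpen_pdisc.eventually_mem htm).filter_mono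
        nhdsWithin_le_nhds).and (hfmer _ htm).eventually_analyticAt)
    have E3 : ∀ᶠ t in 𝓝[≠] t₀,
        ((2 * t ∈ PDisc r ∧ AnalyticAt ℂ g (2 * t)) ∧ g (2 * t) ≠ 0) :=
      tends2.eventually ((((isOpen_pdisc.eventually_mem ht2).filter_mono
        nhdsWithin_le_nhds).and (hgmer _ ht2).eventually_analyticAt).and (hgnv _ ht2))
    obtain ⟨t, ⟨⟨⟨hxU, hfx⟩, hfx0⟩, hyU, hfy⟩, ⟨h2U, hg2⟩, hg20⟩ :=
      ((E1.and E2).and E3).exists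
    have h1 := hfe (t + u / 2) (t - u / 2) hxU hyU
      (by rw [show t + u / 2 + (t - u / 2) = 2 * t from by ring]; exact h2U)
      (by rw [show t + u / 2 - (t - u / 2) = u from by ring]; exact hu)
      hfx hfy
      (by rw [show t + u / 2 + (t - u / 2) = 2 * t from by ring]; exact hg2)
      (by rw [show t + u / 2 - (t - u / 2) = u from by ring]; exact hgu)
    have h2 := hfe (t - u / 2) (t + u / 2) hyU hxU
      (by rw [show t - u / 2 + (t + u / 2) = 2 * t from by ring]; exact h2U)
      (by rw [show t - u / 2 - (t + u / 2) = -u from by ring]; exact hu')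
      hfy hfx
      (by rw [show t - u / 2 + (t + u / 2) = 2 * t from by ring]; exact hg2)
      (by rw [show t - u / 2 - (t + u / 2) = -u from by ring]; exact hgu')
    rw [show t + u / 2 + (t - u / 2) = 2 * t from by ring,
      show t + u / 2 - (t - u / 2) = u from by ring] at h1
    rw [show t - u / 2 + (t + u / 2) = 2 * t from by ring,
      show t - u / 2 - (t + u / 2) = -u from by ring] at h2
    by_cases hc : f (t + u / 2) = f (t - u / 2)
    · exfalso
      rw [← hc] at h1
      have h0 : f (t + u / 2) * (2 * g (2 * t)) = 0 := by linear_combination h1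
      rcases mul_eq_zero.mp h0 with h | h
      · exact hfx0 h
      · rcases mul_eq_zero.mp h with h' | h'
        · exact two_ne_zero h'
        · exact hg20 h'
    · have key : (f (t + u / 2) - f (t - u / 2)) * (g u + g (-u)) = 0 := by
        linear_combination h1 - h2
      rcases mul_eq_zero.mp key with h | h
      · exact (hc (sub_eq_zero.mp h)).elim
      · linear_combination h
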